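/- In a deterministic Ex-BMDP, let π be an endogenous policy, let x_0 be drawn from some distribution μ over X, let a_0 = a ∈ A be a fixed first action, and thereafter execute π. Then for every t ≥ 1 and every x, x' ∈ X such that P(x_0 = x, a_0 = a, x_t = x') > 0, writing s = f*(x), e = f*_e(x), s' = f*(x'), e' = f*_e(x'), the conditional observation distribution factorizes as P_π(x_t = x' | x_0 = x, a_0 = a) = q(x' | s', e') · P_π(s_t = s' | s_0 = s, a_0 = a) · P(e_t = e' | e_0 = e), where P_π(s_t = s' | s_0 = s, a_0 = a) is the probability that the endogenous Markov chain (first action a, subsequent actions from π̄) is at s' after t steps, and P(e_t = e' | e_0 = e) is the t-step transition probability of the exogenous chain with kernel T_e. -/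
import Mathlib


open Finset

/-- `n`-step transition probabilities (matrix power) of a kernel `K`. -/
noncomputable def matPow {W : Type*} [Fintype W] [DecidableEq W]
    (K : W → W → ℝ) : ℕ → W → W → ℝ
  | 0, w, w' => if w = w' then 1 else 0
  | n + 1, w, w' => ∑ u : W, K w u * matPow K n u w'

/-- Evolve a (sub)distribution `ν` for `n` steps under the kernel `K`. -/
noncomputable def evolveDist {W : Type*} [Fintype W]
    (K : W → W → ℝ) (ν : W → ℝ) : ℕ → W → ℝ
  | 0, w => ν w
  | n + 1, w' => ∑ w : W, evolveDist K ν n w * K w w'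

/-- The Markov kernel on the endogenous states induced by a state policy `π̄`:
`P_S(s'|s) = Σ_a π̄(a|s)·1[T(s,a)=s']`. -/
noncomputable def endoKer {S A : Type*} [Fintype A] [DecidableEq S]
    (T : S → A → S) (πbar : S → A → ℝ) : S → S → ℝ :=
  fun s s' => ∑ a : A, πbar s a * (if T s a = s' then 1 else 0)

/-- The Markov kernel of the joint latent process `(s_t, e_t)` under policy `π`
(observations and actions marginalized out). -/
noncomputable def jointKer {S E X A : Type*} [Fintype X] [Fintype A] [DecidableEq S]
    (T : S → A → S) (Te : E → E → ℝ) (q : S → E → X → ℝ) (π : X → A → ℝ) :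
    S × E → S × E → ℝ :=
  fun w w' =>
    ∑ x : X, q w.1 w.2 x *
      ((∑ a : A, π x a * (if T w.1 a = w'.1 then 1 else 0)) * Te w.2 w'.2)

/-- The joint probability `P(x_0 = x, a_0 = a, x_t = x')` (for `t ≥ 1`) of the
Ex-BMDP process: `x_0` is emitted from `(s_0,e_0) ~ μ0`, the first action is
`a_0`, afterwards the policy `π` is executed, and `x_t` is observed. -/
noncomputable def jointXAX {S E X A : Type*}
    [Fintype S] [Fintype E] [Fintype X] [Fintype A]
    [DecidableEq S] [DecidableEq E] [DecidableEq X] [DecidableEq A]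
    (T : S → A → S) (Te : E → E → ℝ) (q : S → E → X → ℝ) (π : X → A → ℝ)
    (μ0 : S × E → ℝ) (x : X) (a : A) (x' : X) (t : ℕ) : ℝ :=
  ∑ w0 : S × E, μ0 w0 * q w0.1 w0.2 x * π x a *
    ∑ w : S × E,
      evolveDist (jointKer T Te q π)
        (fun w1 => (if w1.1 = T w0.1 a then (1 : ℝ) else 0) * Te w0.2 w1.2)
        (t - 1) w * q w.1 w.2 x'

/-!
STATEMENT 1: Under an endogenous policy π with a fixed first action a, the
conditional observation distribution t steps ahead factorizes:
P_π(x_t = x' | x_0 = x, a_0 = a)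
  = q(x'|s',e') · P_π(s_t = s' | s_0 = s, a_0 = a) · P(e_t = e' | e_0 = e),
where s = f*(x), e = f*_e(x), s' = f*(x'), e' = f*_e(x').
-/


private lemma matPow_succ_right {W : Type*} [Fintype W] [DecidableEq W]
    (K : W → W → ℝ) (n : ℕ) (w w' : W) :
    matPow K (n + 1) w w' = ∑ u : W, matPow K n w u * K u w' := by
  induction n generalizing w w' with
  | zero => simp [matPow]
  | succ n ih =>
      rw [matPow]
      rw [show (∑ u : W, matPow K (n + 1) w u * K u w')
            = ∑ u : W, (∑ v : W, K w v * matPow K n v u) * K u w' from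
          Finset.sum_congr rfl fun u _ => by rw [matPow]]
      simp_rw [ih]
      simp_rw [Finset.mul_sum, Finset.sum_mul]
      rw [Finset.sum_comm]
      exact Finset.sum_congr rfl fun u _ => Finset.sum_congr rfl fun v _ => by ring

private lemma evolve_delta {W : Type*} [Fintype W] [DecidableEq W]
    (K : W → W → ℝ) (w0 : W) (n : ℕ) (w : W) :
    evolveDist K (fun u => if u = w0 then (1 : ℝ) else 0) n w = matPow K n w0 w := by
  induction n generalizing w with
  | zero => simp [evolveDist, matPow, eq_comm]
  | succ n ih =>
      rw [evolveDist, matPow_succ_right]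
      simp_rw [ih]

private lemma evolve_ker_row {W : Type*} [Fintype W] [DecidableEq W]
    (K : W → W → ℝ) (w0 : W) (n : ℕ) (w : W) :
    evolveDist K (fun u => K w0 u) n w = matPow K (n + 1) w0 w := by
  induction n generalizing w with
  | zero => simp [evolveDist, matPow]
  | succ n ih =>
      rw [evolveDist, matPow_succ_right]
      simp_rw [ih]

private lemma evolve_prod {S E : Type*} [Fintype S] [Fintype E]
    (K1 : S → S → ℝ) (K2 : E → E → ℝ) (ν1 : S → ℝ) (ν2 : E → ℝ)
    (n : ℕ) (w : S × E) :
    evolveDist (fun w w' => K1 w.1 w'.1 * K2 w.2 w'.2)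
      (fun w => ν1 w.1 * ν2 w.2) n w
      = evolveDist K1 ν1 n w.1 * evolveDist K2 ν2 n w.2 := by
  induction n generalizing w with
  | zero => simp [evolveDist]
  | succ n ih =>
      rw [evolveDist, evolveDist, evolveDist, Finset.sum_mul_sum,
        Fintype.sum_prod_type]
      refine Finset.sum_congr rfl fun s _ => Finset.sum_congr rfl fun e _ => ?_
      rw [ih]
      ring

private lemma evolve_congr {W : Type*} [Fintype W]
    (K K' : W → W → ℝ) (ν : W → ℝ) (h : ∀ w w', K w w' = K' w w')
    (n : ℕ) (w : W) : evolveDist K ν n w = evolveDist K' ν n w := by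
  have : K = K' := by funext a b; exact h a b
  rw [this]

theorem ac_state_observation_factorization_fixed_first_action
    {S E X A : Type*}
    [Fintype S] [Fintype E] [Fintype X] [Fintype A]
    [DecidableEq S] [DecidableEq E] [DecidableEq X] [DecidableEq A]
    [Nonempty S] [Nonempty E] [Nonempty X] [Nonempty A]
    -- deterministic Ex-BMDP data
    (T : S → A → S) (Te : E → E → ℝ) (q : S → E → X → ℝ)
    (fstar : X → S) (fstarE : X → E)
    (hTe_nonneg : ∀ e e', 0 ≤ Te e e') (hTe_sum : ∀ e, ∑ e' : E, Te e e' = 1)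
    (hq_nonneg : ∀ s e x, 0 ≤ q s e x) (hq_sum : ∀ s e, ∑ x : X, q s e x = 1)
    -- block assumption: the decoders recover the latent state on the support
    (hblock : ∀ s e x, 0 < q s e x → fstar x = s ∧ fstarE x = e)
    -- endogenous policy π and its induced state policy π̄
    (π : X → A → ℝ) (πbar : S → A → ℝ)
    (hπ_nonneg : ∀ x a, 0 ≤ π x a) (hπ_sum : ∀ x, ∑ a : A, π x a = 1)
    (hendo : ∀ x1 x2, fstar x1 = fstar x2 → π x1 = π x2)
    (hπbar : ∀ s e x, 0 < q s e x → ∀ a, πbar s a = π x a)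
    -- initial latent distribution
    (μ0 : S × E → ℝ)
    (hμ0_nonneg : ∀ w, 0 ≤ μ0 w) (hμ0_sum : ∑ w : S × E, μ0 w = 1)
    (x : X) (a : A) (x' : X) (t : ℕ) (ht : 1 ≤ t)
    -- P(x_0 = x, a_0 = a, x_t = x') > 0
    (hpos : 0 < jointXAX T Te q π μ0 x a x' t) :
    -- P_π(x_t = x' | x_0 = x, a_0 = a)
    jointXAX T Te q π μ0 x a x' t
        / ((∑ w : S × E, μ0 w * q w.1 w.2 x) * π x a)
      = q (fstar x') (fstarE x') x'
          * matPow (endoKer T πbar) (t - 1) (T (fstar x) a) (fstar x')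
          * matPow Te t (fstarE x) (fstarE x') :=  by
  -- Step 1: the joint kernel factorizes as a product kernel
  have hker : ∀ w w' : S × E,
      jointKer T Te q π w w' = endoKer T πbar w.1 w'.1 * Te w.2 w'.2 := by
    intro w w'
    unfold jointKer endoKer
    have hterm : ∀ x0 : X,
        q w.1 w.2 x0 *
          ((∑ b : A, π x0 b * (if T w.1 b = w'.1 then (1 : ℝ) else 0)) * Te w.2 w'.2)
        = q w.1 w.2 x0 *
          ((∑ b : A, πbar w.1 b * (if T w.1 b = w'.1 then (1 : ℝ) else 0)) * Te w.2 w'.2) := by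
      intro x0
      rcases (hq_nonneg w.1 w.2 x0).lt_or_eq with h | h
      · have hsum : (∑ b : A, π x0 b * (if T w.1 b = w'.1 then (1 : ℝ) else 0))
            = ∑ b : A, πbar w.1 b * (if T w.1 b = w'.1 then (1 : ℝ) else 0) :=
          Finset.sum_congr rfl fun b _ => by rw [hπbar w.1 w.2 x0 h b]
        rw [hsum]
      · rw [← h]; ring
    rw [Finset.sum_congr rfl fun x0 _ => hterm x0, ← Finset.sum_mul, hq_sum, one_mul]
  -- Step 2: the evolved joint distribution factorizes
  have hev : ∀ w0 w : S × E,
      evolveDist (jointKer T Te q π)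
        (fun w1 => (if w1.1 = T w0.1 a then (1 : ℝ) else 0) * Te w0.2 w1.2)
        (t - 1) w
      = matPow (endoKer T πbar) (t - 1) (T w0.1 a) w.1 * matPow Te t w0.2 w.2 := by
    intro w0 w
    rw [evolve_congr _ (fun u u' : S × E => endoKer T πbar u.1 u'.1 * Te u.2 u'.2) _ hker]
    rw [evolve_prod (endoKer T πbar) Te
        (fun s1 => if s1 = T w0.1 a then (1 : ℝ) else 0) (fun e1 => Te w0.2 e1)]
    rw [evolve_delta, evolve_ker_row, Nat.sub_add_cancel ht]
  -- Step 3: collapse the inner sum using the block assumption at x'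
  have hinner : ∀ w0 : S × E,
      (∑ w : S × E,
        evolveDist (jointKer T Te q π)
          (fun w1 => (if w1.1 = T w0.1 a then (1 : ℝ) else 0) * Te w0.2 w1.2)
          (t - 1) w * q w.1 w.2 x')
      = matPow (endoKer T πbar) (t - 1) (T w0.1 a) (fstar x')
          * matPow Te t w0.2 (fstarE x') * q (fstar x') (fstarE x') x' := by
    intro w0
    rw [Finset.sum_congr rfl fun w _ => by rw [hev w0 w]]
    refine Finset.sum_eq_single_of_mem ((fstar x', fstarE x') : S × E)
      (Finset.mem_univ _) ?_
    intro b _ hb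
    have hq0 : q b.1 b.2 x' = 0 := by
      rcases (hq_nonneg b.1 b.2 x').lt_or_eq with h | h
      · obtain ⟨h1, h2⟩ := hblock b.1 b.2 x' h
        have hbeq : b = ((fstar x', fstarE x') : S × E) := by rw [h1, h2]
        exact absurd hbeq hb
      · exact h.symm
    rw [hq0, mul_zero]
  -- Step 4: collapse the outer sum using the block assumption at x
  have hJ : jointXAX T Te q π μ0 x a x' t
      = ((∑ w : S × E, μ0 w * q w.1 w.2 x) * π x a)
        * (matPow (endoKer T πbar) (t - 1) (T (fstar x) a) (fstar x')
            * matPow Te t (fstarE x) (fstarE x') * q (fstar x') (fstarE x') x') := by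
    unfold jointXAX
    have hterm : ∀ w0 : S × E,
        μ0 w0 * q w0.1 w0.2 x * π x a *
          (∑ w : S × E,
            evolveDist (jointKer T Te q π)
              (fun w1 => (if w1.1 = T w0.1 a then (1 : ℝ) else 0) * Te w0.2 w1.2)
              (t - 1) w * q w.1 w.2 x')
        = μ0 w0 * q w0.1 w0.2 x *
            (π x a * (matPow (endoKer T πbar) (t - 1) (T (fstar x) a) (fstar x')
              * matPow Te t (fstarE x) (fstarE x') * q (fstar x') (fstarE x') x')) := by
      intro w0
      rw [hinner w0]
      rcases (mul_nonneg (hμ0_nonneg w0) (hq_nonneg w0.1 w0.2 x)).lt_or_eq with h | h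
      · have hqpos : 0 < q w0.1 w0.2 x := by
          rcases (hq_nonneg w0.1 w0.2 x).lt_or_eq with h' | h'
          · exact h'
          · rw [← h', mul_zero] at h; exact absurd h (lt_irrefl 0)
        obtain ⟨h1, h2⟩ := hblock w0.1 w0.2 x hqpos
        rw [← h1, ← h2]; ring
      · rw [← h]; ring
    rw [Finset.sum_congr rfl fun w0 _ => hterm w0, ← Finset.sum_mul]
    ring
  have hD : (∑ w : S × E, μ0 w * q w.1 w.2 x) * π x a ≠ 0 := by
    intro h0
    rw [hJ, h0, zero_mul] at hpos
    exact lt_irrefl 0 hpos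
  rw [hJ, mul_div_cancel_left₀ _ hD]
  ring
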